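/- arXiv:1406.3415 — 2 statements merged into one kernel-verified Lean document; each statement's English description precedes it below -/
import Mathlib

section
/- Let G be a finite group acting on a finite set S, with Δ a system of orbit representatives, {G_1,...,G_N} a transversal of the conjugacy classes of subgroups of G with |G_1| ≥ ... ≥ |G_N|, and B = (b_{i,j}) the inverse of the table of marks matrix M_{i,j} = (1/|G_j|)·#{σ ∈ G : σG_iσ⁻¹ ⊆ G_j}. Then for every G-invariant weight function w : S → ℚ and every index i, the sum of w(s) over representatives s ∈ Δ whose stabilizer G_s is conjugate to G_i equals Σ_{j=1}^N b_{i,j} · Σ_{s ∈ S, G_j fixes s} w(s). -/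
attribute [local instance] Classical.propDecidable

section helpers

variable {G : Type*} [Group G]

private lemma mapconj_mapconj (A : Subgroup G) (τ σ : G) :
    (A.map (MulAut.conj σ).toMonoidHom).map (MulAut.conj τ).toMonoidHom
      = A.map (MulAut.conj (τ * σ)).toMonoidHom := by
  rw [Subgroup.map_map]; congr 1; ext x; simp [MulAut.conj_apply, mul_assoc]

private lemma mapconj_one (A : Subgroup G) : A.map (MulAut.conj (1:G)).toMonoidHom = A := by
  ext x; simp [MulAut.conj_apply]

private lemma mapconj_le_iff (ρ : G) (A B : Subgroup G) :
    A.map (MulAut.conj ρ).toMonoidHom ≤ B ↔ A ≤ B.map (MulAut.conj ρ⁻¹).toMonoidHom := by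
  constructor
  · intro h
    have := Subgroup.map_mono (f := (MulAut.conj ρ⁻¹).toMonoidHom) h
    rwa [mapconj_mapconj, inv_mul_cancel, mapconj_one] at this
  · intro h
    have := Subgroup.map_mono (f := (MulAut.conj ρ).toMonoidHom) h
    rwa [mapconj_mapconj, mul_inv_cancel, mapconj_one] at this

private lemma mapconj_le_mapconj_iff (ρ : G) {A B : Subgroup G} :
    A.map (MulAut.conj ρ).toMonoidHom ≤ B.map (MulAut.conj ρ).toMonoidHom ↔ A ≤ B :=
  Subgroup.map_le_map_iff_of_injective (MulAut.conj ρ).injective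

private lemma card_mapconj (A : Subgroup G) (ρ : G) :
    Nat.card (A.map (MulAut.conj ρ).toMonoidHom) = Nat.card A :=
  (Nat.card_congr (A.equivMapOfInjective _ (MulAut.conj ρ).injective).toEquiv).symm

private lemma card_conj_le (K H H' : Subgroup G) (τ : G)
    (hτ : H.map (MulAut.conj τ).toMonoidHom = H') :
    Nat.card {σ : G // K ≤ H.map (MulAut.conj σ).toMonoidHom}
      = Nat.card {σ : G // K.map (MulAut.conj σ).toMonoidHom ≤ H'} := by
  refine Nat.card_congr (Equiv.subtypeEquiv
    ((Equiv.inv G).trans (Equiv.mulLeft τ)) fun σ => ?_)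
  simp only [Equiv.trans_apply, Equiv.inv_apply, Equiv.coe_mulLeft]
  rw [← hτ, ← mapconj_mapconj, mapconj_le_mapconj_iff, mapconj_le_iff, inv_inv]

private lemma card_filter_eq_nat_card {α : Type*} [Fintype α] (p : α → Prop) :
    (Finset.univ.filter p).card = Nat.card {x // p x} := by
  classical
  rw [Nat.card_eq_fintype_card]
  convert (Fintype.card_subtype p).symm using 2

private lemma card_filter_smul_eq {S : Type*} [Fintype G] [MulAction G S]
    (t s : S) (σ₀ : G) (h : σ₀ • t = s) :
    (Finset.univ.filter (fun σ : G => σ • t = s)).card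
      = Nat.card (MulAction.stabilizer G t) := by
  rw [card_filter_eq_nat_card]
  refine Nat.card_congr ⟨fun σ => ⟨σ₀⁻¹ * σ.1, ?_⟩, fun τ => ⟨σ₀ * τ.1, ?_⟩, ?_, ?_⟩
  · have := σ.2
    simp only [MulAction.mem_stabilizer_iff, mul_smul, this, ← h, inv_smul_smul]
  · have := τ.2
    simp only [MulAction.mem_stabilizer_iff] at this
    simp [mul_smul, this, h]
  · intro σ; simp
  · intro τ; simp

end helpers

/-- White's Burnside-like lemma for counting patterns with a
prescribed (conjugacy class of) automorphism group. -/
theorem white_burnside_like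
    (G : Type*) [Group G] [Fintype G]
    (S : Type*) [Fintype S] [MulAction G S]
    (Δ : Finset S)
    -- Δ is a system of orbit representatives
    (hΔ : ∀ s : S, ∃! t : S, t ∈ Δ ∧ ∃ σ : G, σ • s = t)
    (N : ℕ) (Gs : Fin N → Subgroup G)
    -- complete system of representatives of conjugacy classes of subgroups
    (hrep : ∀ H : Subgroup G, ∃! i : Fin N,
      ∃ σ : G, H.map (MulAut.conj σ).toMonoidHom = Gs i)
    -- weakly decreasing cardinality
    (horder : ∀ i j : Fin N, i ≤ j → Nat.card (Gs j) ≤ Nat.card (Gs i))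
    (M B : Matrix (Fin N) (Fin N) ℚ)
    (hM : ∀ i j, M i j = (1 / (Nat.card (Gs j) : ℚ)) *
      (Nat.card {σ : G // (Gs i).map (MulAut.conj σ).toMonoidHom ≤ Gs j} : ℚ))
    (hB₁ : M * B = 1) (hB₂ : B * M = 1)
    (w : S → ℚ) (hw : ∀ (σ : G) (s : S), w (σ • s) = w s)
    (i : Fin N) :
    (∑ s ∈ Δ, if (∃ σ : G, (MulAction.stabilizer G s).map
        (MulAut.conj σ).toMonoidHom = Gs i) then w s else 0)
      = ∑ j : Fin N, B i j *
          ∑ s : S, if (∀ σ ∈ Gs j, σ • s = s) then w s else 0 := by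
  classical
  -- the two vectors
  set a : Fin N → ℚ := fun k => ∑ s ∈ Δ,
    if (∃ σ : G, (MulAction.stabilizer G s).map
        (MulAut.conj σ).toMonoidHom = Gs k) then w s else 0 with ha
  set c : Fin N → ℚ := fun k =>
    ∑ s : S, if (∀ σ ∈ Gs k, σ • s = s) then w s else 0 with hc
  show a i = ∑ j, B i j * c j
  -- orbit representative map
  have rep1 : ∀ s : S, (hΔ s).exists.choose ∈ Δ := fun s => (hΔ s).exists.choose_spec.1
  set rep : S → S := fun s => (hΔ s).exists.choose with hrepdef
  have rep2 : ∀ s : S, ∃ σ : G, σ • s = rep s := fun s => (hΔ s).exists.choose_spec.2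
  have rep3 : ∀ (s t : S), t ∈ Δ → (∃ σ : G, σ • s = t) → rep s = t := by
    intro s t ht hσ
    exact (hΔ s).unique ⟨rep1 s, rep2 s⟩ ⟨ht, hσ⟩
  have rep4 : ∀ (σ : G) (t : S), t ∈ Δ → rep (σ • t) = t := by
    intro σ t ht
    exact rep3 _ _ ht ⟨σ⁻¹, inv_smul_smul σ t⟩
  -- conjugacy class index of the stabilizer
  set ι : S → Fin N := fun s => (hrep (MulAction.stabilizer G s)).exists.choose with hι
  have ι1 : ∀ s : S, ∃ τ : G, (MulAction.stabilizer G s).map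
      (MulAut.conj τ).toMonoidHom = Gs (ι s) :=
    fun s => (hrep (MulAction.stabilizer G s)).exists.choose_spec
  have ι2 : ∀ (s : S) (k : Fin N),
      (∃ τ : G, (MulAction.stabilizer G s).map (MulAut.conj τ).toMonoidHom = Gs k) →
      ι s = k := by
    intro s k h
    exact (hrep (MulAction.stabilizer G s)).unique (ι1 s) h
  have hcardι : ∀ s : S, Nat.card (MulAction.stabilizer G s) = Nat.card (Gs (ι s)) := by
    intro s
    obtain ⟨τ, hτ⟩ := ι1 s
    rw [← hτ, card_mapconj]
  have hpos : ∀ k : Fin N, (0 : ℚ) < (Nat.card (Gs k) : ℚ) := by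
    intro k; exact_mod_cast Nat.card_pos
  -- a as a fiber sum over ι
  have ha' : ∀ k : Fin N, a k = ∑ t ∈ Δ.filter (fun t => ι t = k), w t := by
    intro k
    rw [ha, Finset.sum_filter]
    refine Finset.sum_congr rfl fun t _ => ?_
    refine if_congr ?_ rfl rfl
    constructor
    · exact ι2 t k
    · rintro rfl; exact ι1 t
  -- per-orbit computation
  have orbit_key : ∀ (k : Fin N), ∀ t ∈ Δ,
      ∑ s ∈ Finset.univ.filter (fun s => rep s = t),
        (if Gs k ≤ MulAction.stabilizer G s then w s else 0)
      = M k (ι t) * w t := by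
    intro k t ht
    obtain ⟨τ, hτ⟩ := ι1 t
    set n : ℕ := Nat.card (MulAction.stabilizer G t) with hn
    have hnG : (n : ℚ) = (Nat.card (Gs (ι t)) : ℚ) := by exact_mod_cast hcardι t
    have hn0 : (n : ℚ) ≠ 0 := by rw [hnG]; exact (hpos _).ne'
    have step1 : ∑ σ : G, (if Gs k ≤ MulAction.stabilizer G (σ • t) then w (σ • t) else 0)
        = (n : ℚ) * ∑ s ∈ Finset.univ.filter (fun s => rep s = t),
            (if Gs k ≤ MulAction.stabilizer G s then w s else 0) := by
      rw [← Finset.sum_fiberwise_of_maps_to (g := fun σ : G => σ • t)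
        (t := Finset.univ.filter (fun s => rep s = t))
        (fun σ _ => by simp [rep4 σ t ht])
        (fun σ => if Gs k ≤ MulAction.stabilizer G (σ • t) then w (σ • t) else 0),
        Finset.mul_sum]
      refine Finset.sum_congr rfl fun s hs => ?_
      have hs' : rep s = t := (Finset.mem_filter.mp hs).2
      obtain ⟨σ₁, hσ₁⟩ := rep2 s
      rw [hs'] at hσ₁
      have hσ₀ : σ₁⁻¹ • t = s := by rw [← hσ₁, inv_smul_smul]
      calc ∑ σ ∈ Finset.univ.filter (fun σ : G => σ • t = s),
              (if Gs k ≤ MulAction.stabilizer G (σ • t) then w (σ • t) else 0)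
          = ∑ _σ ∈ Finset.univ.filter (fun σ : G => σ • t = s),
              (if Gs k ≤ MulAction.stabilizer G s then w s else 0) := by
            refine Finset.sum_congr rfl fun σ hσ => ?_
            rw [(Finset.mem_filter.mp hσ).2]
        _ = ((Finset.univ.filter (fun σ : G => σ • t = s)).card : ℚ) *
              (if Gs k ≤ MulAction.stabilizer G s then w s else 0) := by
            rw [Finset.sum_const, nsmul_eq_mul]
        _ = (n : ℚ) * (if Gs k ≤ MulAction.stabilizer G s then w s else 0) := by
            rw [card_filter_smul_eq t s σ₁⁻¹ hσ₀]
    have step2 : ∑ σ : G, (if Gs k ≤ MulAction.stabilizer G (σ • t) then w (σ • t) else 0)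
        = ((Nat.card {σ : G // (Gs k).map (MulAut.conj σ).toMonoidHom ≤ Gs (ι t)}) : ℚ)
            * w t := by
      have heq : ∀ σ : G, (if Gs k ≤ MulAction.stabilizer G (σ • t) then w (σ • t) else 0)
          = (if Gs k ≤ (MulAction.stabilizer G t).map (MulAut.conj σ).toMonoidHom
              then w t else 0) := by
        intro σ
        rw [MulAction.stabilizer_smul_eq_stabilizer_map_conj, hw]
      simp_rw [heq]
      rw [← Finset.sum_filter, Finset.sum_const, nsmul_eq_mul,
        card_filter_eq_nat_card, card_conj_le (Gs k) (MulAction.stabilizer G t) (Gs (ι t)) τ hτ]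
    have := step1.symm.trans step2
    rw [hM k (ι t), ← hnG]
    field_simp at this ⊢
    linarith [this]
  -- the key linear identity : M ⬝ a = c
  have key : ∀ k : Fin N, c k = ∑ j : Fin N, M k j * a j := by
    intro k
    have hc' : c k = ∑ s : S,
        (if Gs k ≤ MulAction.stabilizer G s then w s else 0) := by
      rw [hc]
      refine Finset.sum_congr rfl fun s _ => ?_
      refine if_congr ?_ rfl rfl
      simp [SetLike.le_def, MulAction.mem_stabilizer_iff]
    rw [hc', ← Finset.sum_fiberwise_of_maps_to (g := rep) (t := Δ)
      (fun s _ => rep1 s) (fun s => if Gs k ≤ MulAction.stabilizer G s then w s else 0)]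
    have : ∑ t ∈ Δ, ∑ s ∈ Finset.univ.filter (fun s => rep s = t),
        (if Gs k ≤ MulAction.stabilizer G s then w s else 0)
        = ∑ t ∈ Δ, M k (ι t) * w t :=
      Finset.sum_congr rfl fun t ht => orbit_key k t ht
    rw [this, ← Finset.sum_fiberwise_of_maps_to (g := ι) (t := Finset.univ)
      (fun t _ => Finset.mem_univ (ι t)) (fun t => M k (ι t) * w t)]
    refine Finset.sum_congr rfl fun j _ => ?_
    rw [ha' j, Finset.mul_sum]
    refine Finset.sum_congr rfl fun t ht => ?_
    rw [(Finset.mem_filter.mp ht).2]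
  -- conclude using B * M = 1
  symm
  calc ∑ j, B i j * c j
      = ∑ j, ∑ j', B i j * (M j j' * a j') := by
        refine Finset.sum_congr rfl fun j _ => ?_
        rw [key j, Finset.mul_sum]
    _ = ∑ j', (∑ j, B i j * M j j') * a j' := by
        rw [Finset.sum_comm]
        refine Finset.sum_congr rfl fun j' _ => ?_
        rw [Finset.sum_mul]
        refine Finset.sum_congr rfl fun j _ => ?_
        ring
    _ = ∑ j', (B * M) i j' * a j' := by
        refine Finset.sum_congr rfl fun j' _ => ?_
        rw [Matrix.mul_apply]
    _ = a i := by
        rw [hB₂]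
        simp [Matrix.one_apply]
end

section
/- For 2k = 8, the unique (up to Aff(ℤ_8)-equivalence) strong dichotomy has polarity e⁵.(−1): i.e., if S ⊆ ℤ/8ℤ is a 4-element subset with trivial stabilizer in Aff(ℤ_8) whose complement equals g·S for some g ∈ Aff(ℤ_8), then such g is unique and is conjugate (in the appropriate sense induced by the Aff-action on S) to the map x ↦ −x + 5. -/
/-- The affine action of (u,v) on a subset of ℤ/nℤ. -/
def affActSet (n : ℕ) (u : ZMod n) (v : (ZMod n)ˣ) (S : Set (ZMod n)) : Set (ZMod n) :=
  (fun x => (v : ZMod n) * x + u) '' S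

lemma affActSet_comp (n : ℕ) (u1 u2 : ZMod n) (v1 v2 : (ZMod n)ˣ) (S : Set (ZMod n)) :
    affActSet n u2 v2 (affActSet n u1 v1 S)
      = affActSet n ((v2 : ZMod n) * u1 + u2) (v2 * v1) S := by
  unfold affActSet
  rw [Set.image_image]
  have h : (fun x => (v2 : ZMod n) * ((v1 : ZMod n) * x + u1) + u2)
      = fun x => ((v2 * v1 : (ZMod n)ˣ) : ZMod n) * x + ((v2 : ZMod n) * u1 + u2) := by
    funext x; push_cast; ring
  rw [h]

lemma affActSet_id (n : ℕ) (S : Set (ZMod n)) : affActSet n 0 1 S = S := by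
  simp [affActSet]

lemma key : ∀ T : Finset (ZMod 8), T.card = 4 →
    (∀ (u : ZMod 8) (v : (ZMod 8)ˣ), T.image (fun x => (v : ZMod 8) * x + u) = T →
      u = 0 ∧ v = 1) →
    ∀ (u : ZMod 8) (v : (ZMod 8)ˣ), T.image (fun x => (v : ZMod 8) * x + u) = Tᶜ →
      v = -1 ∧ ∃ a : ZMod 8, 2 * a = 5 - u := by
  set_option maxRecDepth 4000 in decide

/-- for 2k = 8, if S is a strong dichotomy (4-element, rigid,
self-complementary subset of ℤ/8ℤ), then its polarity g is unique and is
conjugate in Aff(ℤ_8) to the map x ↦ −x + 5. -/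
theorem polarity_eight (S : Set (ZMod 8))
    (hcard : S.ncard = 4)
    (hrigid : ∀ (u : ZMod 8) (v : (ZMod 8)ˣ), affActSet 8 u v S = S → u = 0 ∧ v = 1)
    (u : ZMod 8) (v : (ZMod 8)ˣ)
    (hpol : affActSet 8 u v S = Sᶜ) :
    (∀ (u' : ZMod 8) (v' : (ZMod 8)ˣ), affActSet 8 u' v' S = Sᶜ →
      u' = u ∧ v' = v) ∧
    ∃ (a : ZMod 8) (b : (ZMod 8)ˣ), ∀ x : ZMod 8,
      (b : ZMod 8) * ((v : ZMod 8) * ((b⁻¹ : (ZMod 8)ˣ) * (x - a)) + u) + a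
        = -x + 5 := by
  classical
  constructor
  · intro u' v' hpol'
    have h := hpol'.trans hpol.symm
    have h2 := congrArg (affActSet 8 (-((v⁻¹ : (ZMod 8)ˣ) * u)) v⁻¹) h
    rw [affActSet_comp, affActSet_comp] at h2
    have hvv : v⁻¹ * v = 1 := inv_mul_cancel v
    rw [hvv] at h2
    have hRHS : ((v⁻¹ : (ZMod 8)ˣ) : ZMod 8) * u + -((v⁻¹ : (ZMod 8)ˣ) * u) = 0 := by ring
    rw [hRHS, affActSet_id] at h2
    obtain ⟨hu0, hv1⟩ := hrigid _ _ h2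
    constructor
    · have : ((v⁻¹ : (ZMod 8)ˣ) : ZMod 8) * u' = ((v⁻¹ : (ZMod 8)ˣ) : ZMod 8) * u := by
        linear_combination hu0
      have := congrArg (fun y => (v : ZMod 8) * y) this
      simpa [← mul_assoc, ← Units.val_mul, mul_inv_cancel v] using this
    · have := congrArg (fun w => v * w) hv1
      simpa [← mul_assoc, mul_inv_cancel v] using this
  · -- transfer to finset
    have hfin : S.Finite := Set.toFinite S
    set T : Finset (ZMod 8) := hfin.toFinset with hTdef
    have hTS : (T : Set (ZMod 8)) = S := hfin.coe_toFinset
    have hTcard : T.card = 4 := by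
      rw [← hcard, Set.ncard_eq_toFinset_card S hfin]
    have himg : ∀ (u0 : ZMod 8) (v0 : (ZMod 8)ˣ) ,
        ((T.image (fun x => (v0 : ZMod 8) * x + u0) : Finset (ZMod 8)) : Set (ZMod 8))
          = affActSet 8 u0 v0 S := by
      intro u0 v0
      rw [Finset.coe_image, hTS]; rfl
    have hrigidT : ∀ (u0 : ZMod 8) (v0 : (ZMod 8)ˣ),
        T.image (fun x => (v0 : ZMod 8) * x + u0) = T → u0 = 0 ∧ v0 = 1 := by
      intro u0 v0 h
      apply hrigid u0 v0
      rw [← himg u0 v0, h, hTS]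
    have hpolT : T.image (fun x => (v : ZMod 8) * x + u) = Tᶜ := by
      apply Finset.coe_injective
      rw [himg u v, hpol, Finset.coe_compl, hTS]
    obtain ⟨hv, a, ha⟩ := key T hTcard hrigidT u v hpolT
    refine ⟨a, 1, fun x => ?_⟩
    have hvc : (v : ZMod 8) = -1 := by rw [hv]; rfl
    simp only [hvc, inv_one, Units.val_one]
    linear_combination ha
end
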